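/- Let q ≥ 1 be a natural number and let g, G : ℝ → ℝ → ℝ be kernels, each continuous on the triangular domain D_S := {(t,τ) : 0 ≤ t ≤ S, 0 ≤ τ ≤ t} for every S > 0, satisfying G(t,τ) ≥ g(t,τ) ≥ 0 for all 0 ≤ τ ≤ t. Then for all real T, t with 0 < T ≤ t: ∫₀ᵀ ( ∫_σ^t G(t,τ)·(τ−σ)^(q−1)/(q−1)! dτ ) dσ ≥ (1/q!)·( ∫₀ᵀ g(t,τ)·τ^q dτ + ∫_T^t g(t,τ)·( τ^q − (τ−T)^q ) dτ ) ≥ 0. (Equation 'the expression' in the proof of the paper's Lemma 7(a).) -/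

import Mathlib

/-!
Swapping the order of integration over the triangle `0 ≤ σ ≤ min T τ, τ ≤ t`, the inner integral
`∫₀^{min T τ} (τ - σ)^n dσ` equals `(τ^(n+1) - (τ - min T τ)^(n+1)) / (n+1)`, a nonnegative
weight in `τ`. Both sides of the inequality are therefore integrals over `[0, t]` of `G(t, ·)`
resp. `g(t, ·)` against this same weight, so `0 ≤ g ≤ G` gives both claims.
-/

open intervalIntegral Set

/-- A kernel `g : ℝ → ℝ → ℝ` is continuous on the triangular domain
`D_S = {(t,τ) : 0 ≤ t ≤ S, 0 ≤ τ ≤ t}` for every `S > 0`. -/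
def ContinuousOnTriangles (g : ℝ → ℝ → ℝ) : Prop :=
  ∀ S : ℝ, 0 < S →
    ContinuousOn (fun p : ℝ × ℝ => g p.1 p.2)
      {p : ℝ × ℝ | 0 ≤ p.1 ∧ p.1 ≤ S ∧ 0 ≤ p.2 ∧ p.2 ≤ p.1}

open MeasureTheory

theorem ContinuousOnTriangles.continuousOn_slice {g : ℝ → ℝ → ℝ} (hg : ContinuousOnTriangles g)
    {t : ℝ} (ht : 0 ≤ t) : ContinuousOn (g t) (Icc 0 t) :=
  (hg (t + 1) (by linarith)).comp (Continuous.prodMk_right t).continuousOn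
    fun _ hτ => ⟨ht, by linarith, hτ.1, hτ.2⟩

theorem integral_integral_triangle_swap {E : Type*} [NormedAddCommGroup E] [NormedSpace ℝ E]
    {F : ℝ → ℝ → E} {a T t : ℝ} (haT : a ≤ T) (hTt : T ≤ t)
    (hF : IntegrableOn (Function.uncurry F) (Ioc a T ×ˢ Ioc a t)) :
    ∫ σ in a..T, ∫ τ in σ..t, F σ τ = ∫ τ in a..t, ∫ σ in a..min T τ, F σ τ := by
  set S : Set (ℝ × ℝ) := {p | p.1 ≤ p.2}
  have hS : MeasurableSet S := measurableSet_le measurable_fst measurable_snd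
  have swap := intervalIntegral_intervalIntegral_swap (a := a) (b := T) (c := a) (d := t)
    (F := fun σ τ => S.indicator (Function.uncurry F) (σ, τ))
    (by rw [uIoc_of_le haT, uIoc_of_le (haT.trans hTt)]; exact hF.indicator hS)
  convert swap using 1
  · refine integral_congr_ae (ae_of_all _ fun σ hσ => ?_)
    rw [uIoc_of_le haT] at hσ
    have hslice : (fun τ => S.indicator (Function.uncurry F) (σ, τ)) = (Ici σ).indicator (F σ) := by
      ext τ; simp [S, indicator_apply]
    rw [hslice, integral_of_le (hσ.2.trans hTt), integral_of_le (haT.trans hTt),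
      integral_congr_ae (ae_restrict_of_ae (indicator_ae_eq_of_ae_eq_set Ioi_ae_eq_Ici).symm),
      setIntegral_indicator measurableSet_Ioi, Ioc_inter_Ioi, max_eq_right hσ.1.le]
  · refine integral_congr_ae (ae_of_all _ fun τ hτ => ?_)
    rw [uIoc_of_le (haT.trans hTt)] at hτ
    have hslice : (fun σ => S.indicator (Function.uncurry F) (σ, τ)) =
        (Iic τ).indicator (fun σ => F σ τ) := by
      ext σ; simp [S, indicator_apply]
    rw [hslice, integral_of_le (le_min haT hτ.1.le), integral_of_le haT,
      setIntegral_indicator measurableSet_Iic, Ioc_inter_Iic]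

theorem integral_sub_pow (n : ℕ) (τ m : ℝ) :
    ∫ σ in (0 : ℝ)..m, (τ - σ) ^ n = (τ ^ (n + 1) - (τ - m) ^ (n + 1)) / (n + 1) := by
  rw [integral_comp_sub_left (· ^ n), integral_pow, sub_zero]

def truncPowWeight (n : ℕ) (T τ : ℝ) : ℝ := τ ^ (n + 1) - (τ - min T τ) ^ (n + 1)

theorem continuous_truncPowWeight (n : ℕ) (T : ℝ) : Continuous (truncPowWeight n T) := by
  unfold truncPowWeight; fun_prop

theorem truncPowWeight_nonneg (n : ℕ) {T τ : ℝ} (hT : 0 ≤ T) (hτ : 0 ≤ τ) :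
    0 ≤ truncPowWeight n T τ :=
  sub_nonneg.2 <| pow_le_pow_left₀ (sub_nonneg.2 (min_le_right T τ))
    (sub_le_self _ (le_min hT hτ)) _

theorem integral_integral_mul_sub_pow {f : ℝ → ℝ} {T t : ℝ} (n : ℕ) (hT : 0 ≤ T) (hTt : T ≤ t)
    (hf : ContinuousOn f (Icc 0 t)) :
    ∫ σ in (0 : ℝ)..T, ∫ τ in σ..t, f τ * (τ - σ) ^ n =
      (∫ τ in (0 : ℝ)..t, f τ * truncPowWeight n T τ) / (n + 1) := by
  have hint : IntegrableOn (Function.uncurry fun σ τ => f τ * (τ - σ) ^ n)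
      (Ioc 0 T ×ˢ Ioc 0 t) := by
    refine ContinuousOn.integrableOn_compact (isCompact_Icc.prod isCompact_Icc) ?_
      |>.mono_set (prod_mono Ioc_subset_Icc_self Ioc_subset_Icc_self)
    exact (hf.comp continuous_snd.continuousOn fun p hp => hp.2).mul (by fun_prop)
  rw [integral_integral_triangle_swap hT hTt hint, ← intervalIntegral.integral_div]
  refine integral_congr fun τ _ => ?_
  rw [intervalIntegral.integral_const_mul, integral_sub_pow, truncPowWeight, mul_div_assoc]

theorem integral_mul_truncPowWeight {f : ℝ → ℝ} {T t : ℝ} (n : ℕ) (hT : 0 ≤ T) (hTt : T ≤ t)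
    (hf : IntervalIntegrable f volume 0 t) :
    ∫ τ in (0 : ℝ)..t, f τ * truncPowWeight n T τ =
      (∫ τ in (0 : ℝ)..T, f τ * τ ^ (n + 1)) +
        ∫ τ in T..t, f τ * (τ ^ (n + 1) - (τ - T) ^ (n + 1)) := by
  have hfw := hf.mul_continuousOn (continuous_truncPowWeight n T).continuousOn
  have hTmem : T ∈ uIcc 0 t := mem_uIcc_of_le hT hTt
  rw [← integral_add_adjacent_intervals (hfw.mono_set (uIcc_subset_uIcc left_mem_uIcc hTmem))
    (hfw.mono_set (uIcc_subset_uIcc hTmem right_mem_uIcc))]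
  congr 1 <;> refine integral_congr fun τ hτ => ?_
  · rw [uIcc_of_le hT] at hτ
    simp [truncPowWeight, min_eq_right hτ.2]
  · rw [uIcc_of_le hTt] at hτ
    simp [truncPowWeight, min_eq_left hτ.1]

/-- **The inequality (equation "the expression") in the proof of the paper's Lemma 7(a).**
For `0 < T ≤ t` and `0 ≤ g ≤ G` on the triangle,
`∫₀ᵀ ∫_σ^t G(t,τ)(τ-σ)^(q-1)/(q-1)! dτ dσ
  ≥ (1/q!)(∫₀ᵀ g(t,τ) τ^q dτ + ∫_T^t g(t,τ)(τ^q - (τ-T)^q) dτ) ≥ 0`. -/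
theorem truncated_iterated_integral_lower_bound
    (q : ℕ) (hq : 1 ≤ q)
    (g G : ℝ → ℝ → ℝ)
    (hg_cont : ContinuousOnTriangles g)
    (hG_cont : ContinuousOnTriangles G)
    (hnonneg : ∀ t τ : ℝ, 0 ≤ τ → τ ≤ t → 0 ≤ g t τ)
    (hdom : ∀ t τ : ℝ, 0 ≤ τ → τ ≤ t → g t τ ≤ G t τ) :
    ∀ T t : ℝ, 0 < T → T ≤ t →
      (∫ σ in (0:ℝ)..T, ∫ τ in σ..t,
          G t τ * (τ - σ) ^ (q - 1) / (Nat.factorial (q - 1) : ℝ)) ≥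
        (1 / (Nat.factorial q : ℝ)) *
          ((∫ τ in (0:ℝ)..T, g t τ * τ ^ q) +
            ∫ τ in T..t, g t τ * (τ ^ q - (τ - T) ^ q)) ∧
      (1 / (Nat.factorial q : ℝ)) *
          ((∫ τ in (0:ℝ)..T, g t τ * τ ^ q) +
            ∫ τ in T..t, g t τ * (τ ^ q - (τ - T) ^ q)) ≥ 0 := by
  obtain ⟨n, rfl⟩ := Nat.exists_eq_add_of_le' hq
  intro T t hT hTt
  have ht : 0 ≤ t := hT.le.trans hTt
  have hgc := hg_cont.continuousOn_slice ht
  have hGc := hG_cont.continuousOn_slice ht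
  have hG : ∫ σ in (0 : ℝ)..T, ∫ τ in σ..t, G t τ * (τ - σ) ^ n / (Nat.factorial n : ℝ) =
      1 / (Nat.factorial (n + 1) : ℝ) * ∫ τ in (0 : ℝ)..t, G t τ * truncPowWeight n T τ := by
    simp only [intervalIntegral.integral_div]
    rw [integral_integral_mul_sub_pow n hT.le hTt hGc, Nat.factorial_succ]
    push_cast
    field_simp
  rw [Nat.add_sub_cancel, hG,
    ← integral_mul_truncPowWeight n hT.le hTt (hgc.intervalIntegrable_of_Icc ht)]
  have hw : ∀ τ ∈ Icc 0 t, 0 ≤ truncPowWeight n T τ := fun τ hτ =>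
    truncPowWeight_nonneg n hT.le hτ.1
  refine ⟨mul_le_mul_of_nonneg_left ?_ (by positivity), mul_nonneg (by positivity) ?_⟩
  · refine integral_mono_on ht ?_ ?_ fun τ hτ =>
      mul_le_mul_of_nonneg_right (hdom t τ hτ.1 hτ.2) (hw τ hτ)
    · exact (hgc.mul (continuous_truncPowWeight n T).continuousOn).intervalIntegrable_of_Icc ht
    · exact (hGc.mul (continuous_truncPowWeight n T).continuousOn).intervalIntegrable_of_Icc ht
  · exact integral_nonneg ht fun τ hτ => mul_nonneg (hnonneg t τ hτ.1 hτ.2) (hw τ hτ)
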